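/- On a 2-dimensional Riemannian manifold with metric q and volume form ε, for smooth functions φ, ψ, λ: ⟨φ,⟨ψ,λ⟩⟩ − ⟨ψ,⟨φ,λ⟩⟩ = {{φ,ψ},λ} + ⟨φ,λ⟩∇²ψ − ⟨ψ,λ⟩∇²φ, where {f,g} = ε^{AB}∇_A f ∇_B g and ⟨f,g⟩ = q^{AB}∇_A f ∇_B g. -/

import Mathlib

noncomputable section

/-- Partial derivative of a function on `ℝ²` in the `i`-th coordinate direction. -/
def pd (i : Fin 2) (f : (Fin 2 → ℝ) → ℝ) : (Fin 2 → ℝ) → ℝ :=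
  fun x => fderiv ℝ f x (Pi.single i 1)

/-- The Poisson bracket `{f,g} = ε^{AB} ∇_A f ∇_B g` of a 2-dimensional Riemannian
manifold with metric `q_{AB} = w⁻¹ δ_{AB}` in (local conformal) coordinates, where
`ε^{AB} = w ε̂^{AB}` is the raised inverse of the Riemannian volume form. -/
def pb (w : (Fin 2 → ℝ) → ℝ) (f g : (Fin 2 → ℝ) → ℝ) : (Fin 2 → ℝ) → ℝ :=
  fun x => w x * (pd 0 f x * pd 1 g x - pd 1 f x * pd 0 g x)

/-- The symmetric bracket `⟨f,g⟩ = q^{AB} ∇_A f ∇_B g`, with `q^{AB} = w δ^{AB}`. -/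
def sb (w : (Fin 2 → ℝ) → ℝ) (f g : (Fin 2 → ℝ) → ℝ) : (Fin 2 → ℝ) → ℝ :=
  fun x => w x * (pd 0 f x * pd 0 g x + pd 1 f x * pd 1 g x)

/-- The Laplace–Beltrami operator of the 2d metric `q_{AB} = w⁻¹ δ_{AB}`:
`∇² f = w Δ_flat f`. -/
def lap (w : (Fin 2 → ℝ) → ℝ) (f : (Fin 2 → ℝ) → ℝ) : (Fin 2 → ℝ) → ℝ :=
  fun x => w x * (pd 0 (pd 0 f) x + pd 1 (pd 1 f) x)

lemma pd_contDiff {f : (Fin 2 → ℝ) → ℝ} (hf : ContDiff ℝ (⊤ : ℕ∞) f) (i : Fin 2) :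
    ContDiff ℝ (⊤ : ℕ∞) (pd i f) := by
  have h : ContDiff ℝ (⊤ : ℕ∞) (fderiv ℝ f) := hf.fderiv_right (by simp)
  exact h.clm_apply (contDiff_const : ContDiff ℝ (⊤ : ℕ∞) (fun _ : Fin 2 → ℝ => (Pi.single i (1:ℝ) : Fin 2 → ℝ)))

lemma pd_mul {f g : (Fin 2 → ℝ) → ℝ} (hf : ContDiff ℝ (⊤ : ℕ∞) f) (hg : ContDiff ℝ (⊤ : ℕ∞) g)
    (i : Fin 2) (x : Fin 2 → ℝ) :
    pd i (fun y => f y * g y) x = pd i f x * g x + f x * pd i g x := by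
  have := fderiv_fun_mul (𝕜 := ℝ) (hf.differentiable (by simp) x) (hg.differentiable (by simp) x)
  simp only [pd, this, ContinuousLinearMap.add_apply, ContinuousLinearMap.smul_apply,
    smul_eq_mul]
  ring

lemma pd_add {f g : (Fin 2 → ℝ) → ℝ} (hf : ContDiff ℝ (⊤ : ℕ∞) f) (hg : ContDiff ℝ (⊤ : ℕ∞) g)
    (i : Fin 2) (x : Fin 2 → ℝ) :
    pd i (fun y => f y + g y) x = pd i f x + pd i g x := by
  have := fderiv_fun_add (𝕜 := ℝ) (hf.differentiable (by simp) x) (hg.differentiable (by simp) x)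
  simp [pd, this]

lemma pd_comm {f : (Fin 2 → ℝ) → ℝ} (hf : ContDiff ℝ (⊤ : ℕ∞) f) (i j : Fin 2) (x : Fin 2 → ℝ) :
    pd i (pd j f) x = pd j (pd i f) x := by
  have hsym : IsSymmSndFDerivAt ℝ f x :=
    (hf.contDiffAt).isSymmSndFDerivAt (by rw [minSmoothness_of_isRCLikeNormedField]; exact WithTop.coe_le_coe.mpr le_top)
  have h2 : ContDiff ℝ (⊤ : ℕ∞) (fderiv ℝ f) := hf.fderiv_right (by simp)
  have hd : DifferentiableAt ℝ (fderiv ℝ f) x := (h2.differentiable (by simp)) x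
  have key : ∀ v u : Fin 2 → ℝ,
      fderiv ℝ (fun y => fderiv ℝ f y v) x u = fderiv ℝ (fderiv ℝ f) x u v := by
    intro v u
    have := fderiv_clm_apply (c := fderiv ℝ f) (u := fun _ => v) hd
      (differentiableAt_const v)
    simp [this]
  calc pd i (pd j f) x
      = fderiv ℝ (fderiv ℝ f) x (Pi.single i 1) (Pi.single j 1) := key _ _
    _ = fderiv ℝ (fderiv ℝ f) x (Pi.single j 1) (Pi.single i 1) := hsym _ _
    _ = pd j (pd i f) x := (key _ _).symm

/-- On a 2-dimensional Riemannian manifold (written in conformal coordinates with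
conformal factor `w > 0`), for smooth functions `φ, ψ, λ`:
`⟨φ,⟨ψ,λ⟩⟩ − ⟨ψ,⟨φ,λ⟩⟩ = {{φ,ψ},λ} + ⟨φ,λ⟩∇²ψ − ⟨ψ,λ⟩∇²φ`. -/
theorem riemannian_bracket_identity (w φ ψ lam : (Fin 2 → ℝ) → ℝ)
    (hw : ContDiff ℝ (⊤ : ℕ∞) w) (hwpos : ∀ x, 0 < w x)
    (hφ : ContDiff ℝ (⊤ : ℕ∞) φ) (hψ : ContDiff ℝ (⊤ : ℕ∞) ψ) (hlam : ContDiff ℝ (⊤ : ℕ∞) lam)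
    (x : Fin 2 → ℝ) :
    sb w φ (sb w ψ lam) x - sb w ψ (sb w φ lam) x =
      pb w (pb w φ ψ) lam x + sb w φ lam x * lap w ψ x - sb w ψ lam x * lap w φ x := by
  have hmul : ∀ {f g : (Fin 2 → ℝ) → ℝ}, ContDiff ℝ (⊤ : ℕ∞) f → ContDiff ℝ (⊤ : ℕ∞) g →
      ContDiff ℝ (⊤ : ℕ∞) (fun y => f y * g y) := fun hf hg => hf.mul hg
  have hadd : ∀ {f g : (Fin 2 → ℝ) → ℝ}, ContDiff ℝ (⊤ : ℕ∞) f → ContDiff ℝ (⊤ : ℕ∞) g →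
      ContDiff ℝ (⊤ : ℕ∞) (fun y => f y + g y) := fun hf hg => hf.add hg
  have hsub : ∀ {f g : (Fin 2 → ℝ) → ℝ}, ContDiff ℝ (⊤ : ℕ∞) f → ContDiff ℝ (⊤ : ℕ∞) g →
      ContDiff ℝ (⊤ : ℕ∞) (fun y => f y - g y) := fun hf hg => hf.sub hg
  -- smoothness of first derivatives
  have hφ0 := pd_contDiff hφ 0; have hφ1 := pd_contDiff hφ 1
  have hψ0 := pd_contDiff hψ 0; have hψ1 := pd_contDiff hψ 1
  have hl0 := pd_contDiff hlam 0; have hl1 := pd_contDiff hlam 1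
  have hsb : ∀ {f g : (Fin 2 → ℝ) → ℝ}, ContDiff ℝ (⊤ : ℕ∞) f → ContDiff ℝ (⊤ : ℕ∞) g →
      ContDiff ℝ (⊤ : ℕ∞) (sb w f g) := by
    intro f g hf hg
    exact hmul hw (hadd (hmul (pd_contDiff hf 0) (pd_contDiff hg 0))
      (hmul (pd_contDiff hf 1) (pd_contDiff hg 1)))
  have hpb : ∀ {f g : (Fin 2 → ℝ) → ℝ}, ContDiff ℝ (⊤ : ℕ∞) f → ContDiff ℝ (⊤ : ℕ∞) g →
      ContDiff ℝ (⊤ : ℕ∞) (pb w f g) := by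
    intro f g hf hg
    exact hmul hw (hsub (hmul (pd_contDiff hf 0) (pd_contDiff hg 1))
      (hmul (pd_contDiff hf 1) (pd_contDiff hg 0)))
  -- expand pd of sb and pb
  have expand_sb : ∀ (f g : (Fin 2 → ℝ) → ℝ), ContDiff ℝ (⊤ : ℕ∞) f → ContDiff ℝ (⊤ : ℕ∞) g →
      ∀ (i : Fin 2) (y : Fin 2 → ℝ),
      pd i (sb w f g) y =
        pd i w y * (pd 0 f y * pd 0 g y + pd 1 f y * pd 1 g y) +
        w y * (pd i (pd 0 f) y * pd 0 g y + pd 0 f y * pd i (pd 0 g) y +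
          (pd i (pd 1 f) y * pd 1 g y + pd 1 f y * pd i (pd 1 g) y)) := by
    intro f g hf hg i y
    have h1 : ContDiff ℝ (⊤ : ℕ∞) (fun z => pd 0 f z * pd 0 g z) :=
      hmul (pd_contDiff hf 0) (pd_contDiff hg 0)
    have h2 : ContDiff ℝ (⊤ : ℕ∞) (fun z => pd 1 f z * pd 1 g z) :=
      hmul (pd_contDiff hf 1) (pd_contDiff hg 1)
    have : sb w f g = fun z => w z *
        ((fun z => pd 0 f z * pd 0 g z) z + (fun z => pd 1 f z * pd 1 g z) z) := rfl
    rw [this, pd_mul hw (hadd h1 h2), pd_add h1 h2,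
      pd_mul (pd_contDiff hf 0) (pd_contDiff hg 0),
      pd_mul (pd_contDiff hf 1) (pd_contDiff hg 1)]
  have expand_pb : ∀ (f g : (Fin 2 → ℝ) → ℝ), ContDiff ℝ (⊤ : ℕ∞) f → ContDiff ℝ (⊤ : ℕ∞) g →
      ∀ (i : Fin 2) (y : Fin 2 → ℝ),
      pd i (pb w f g) y =
        pd i w y * (pd 0 f y * pd 1 g y - pd 1 f y * pd 0 g y) +
        w y * (pd i (pd 0 f) y * pd 1 g y + pd 0 f y * pd i (pd 1 g) y -
          (pd i (pd 1 f) y * pd 0 g y + pd 1 f y * pd i (pd 0 g) y)) := by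
    intro f g hf hg i y
    have h1 : ContDiff ℝ (⊤ : ℕ∞) (fun z => pd 0 f z * pd 1 g z) :=
      hmul (pd_contDiff hf 0) (pd_contDiff hg 1)
    have h2 : ContDiff ℝ (⊤ : ℕ∞) (fun z => pd 1 f z * pd 0 g z) :=
      hmul (pd_contDiff hf 1) (pd_contDiff hg 0)
    have hps : ∀ (u v : (Fin 2 → ℝ) → ℝ), ContDiff ℝ (⊤ : ℕ∞) u → ContDiff ℝ (⊤ : ℕ∞) v →
        pd i (fun z => u z - v z) y = pd i u y - pd i v y := by
      intro u v hu hv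
      have := fderiv_fun_sub (𝕜 := ℝ) (hu.differentiable (by simp) y) (hv.differentiable (by simp) y)
      simp [pd, this]
    have : pb w f g = fun z => w z *
        ((fun z => pd 0 f z * pd 1 g z) z - (fun z => pd 1 f z * pd 0 g z) z) := rfl
    rw [this, pd_mul hw (hsub h1 h2), hps _ _ h1 h2,
      pd_mul (pd_contDiff hf 0) (pd_contDiff hg 1),
      pd_mul (pd_contDiff hf 1) (pd_contDiff hg 0)]
  -- commuting second derivatives
  have cφ := pd_comm hφ 0 1 x
  have cψ := pd_comm hψ 0 1 x
  have cl := pd_comm hlam 0 1 x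
  have cw := pd_comm hw 0 1 x
  simp only [sb, pb, lap]
  rw [expand_sb ψ lam hψ hlam 0 x, expand_sb ψ lam hψ hlam 1 x,
    expand_sb φ lam hφ hlam 0 x, expand_sb φ lam hφ hlam 1 x,
    expand_pb φ ψ hφ hψ 0 x, expand_pb φ ψ hφ hψ 1 x]
  rw [cφ, cψ, cl]
  ring

end
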